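/- arXiv:2202.05127 — 5 statements merged into one kernel-verified Lean document; each statement's English description precedes it below -/
import Mathlib

section
/- Let G be a finite connected simple graph and let d denote its shortest-path distance. There do not exist adjacent vertices u, v and vertices a, a', b, b', x of G such that all of the following hold: d(u,a) = d(u,a') + 1; d(v,a') = d(v,a) + 1; d(u,b) = d(u,b') + 1; d(v,b') = d(v,b) + 1; d(u,a') = d(u,x) + d(x,a'); and d(v,b) = d(v,x) + d(x,b). -/
/-- Metric core of Lemma 5 (bisectors are arc-disjoint): the described
configuration of distances is impossible in a finite connected graph. -/
theorem stmt_3 {V : Type*} [Fintype V] (G : SimpleGraph V) (hG : G.Connected) :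
    ¬ ∃ (u v a a' b b' x : V), G.Adj u v ∧
      G.dist u a = G.dist u a' + 1 ∧
      G.dist v a' = G.dist v a + 1 ∧
      G.dist u b = G.dist u b' + 1 ∧
      G.dist v b' = G.dist v b + 1 ∧
      G.dist u a' = G.dist u x + G.dist x a' ∧
      G.dist v b = G.dist v x + G.dist x b := by
  rintro ⟨u, v, a, a', b, b', x, huv, h1, h2, h3, h4, h5, h6⟩
  have duv : G.dist u v = 1 := SimpleGraph.dist_eq_one_iff_adj.mpr huv
  have dvu : G.dist v u = 1 := by rw [G.dist_comm]; exact duv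
  have t1 : G.dist u a ≤ G.dist u v + G.dist v a := hG.dist_triangle
  have t2 : G.dist v b' ≤ G.dist v u + G.dist u b' := hG.dist_triangle
  have t3 : G.dist v a' ≤ G.dist v x + G.dist x a' := hG.dist_triangle
  have t4 : G.dist u b ≤ G.dist u x + G.dist x b := hG.dist_triangle
  omega
end

section
/- Let G be a finite connected simple graph and let d denote its shortest-path distance. Let a, a', b, b', v, w, x, y, z be vertices of G satisfying: d(v,a') = d(v,a) + 1; d(v,b') = d(v,b) + 1; d(w,a) = d(w,a') + 1; d(w,b) = d(w,b') + 1; d(v,b) = d(v,x) + d(x,b); d(v,a) = d(v,y) + d(y,a); d(w,b') = d(w,y) + d(y,b'); and d(w,a') = d(w,z) + d(z,a'). Then d(x,b) + d(z,a') + 4 ≤ d(x,a') + d(z,b). -/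
/-- Equation (1) in Lemma 9 of the paper: each pair of consecutive crossings of two
bisectors increases the difference `d(·,b) − d(·,a')` by at least `4`. -/
theorem stmt_4 {V : Type*} [Fintype V] (G : SimpleGraph V) (hG : G.Connected)
    (a a' b b' v w x y z : V)
    (h1 : G.dist v a' = G.dist v a + 1)
    (h2 : G.dist v b' = G.dist v b + 1)
    (h3 : G.dist w a = G.dist w a' + 1)
    (h4 : G.dist w b = G.dist w b' + 1)
    (h5 : G.dist v b = G.dist v x + G.dist x b)
    (h6 : G.dist v a = G.dist v y + G.dist y a)
    (h7 : G.dist w b' = G.dist w y + G.dist y b')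
    (h8 : G.dist w a' = G.dist w z + G.dist z a') :
    G.dist x b + G.dist z a' + 4 ≤ G.dist x a' + G.dist z b := by
  have t1 : G.dist v a' ≤ G.dist v x + G.dist x a' := hG.dist_triangle
  have t2 : G.dist w b ≤ G.dist w z + G.dist z b := hG.dist_triangle
  have t3 : G.dist v b' ≤ G.dist v y + G.dist y b' := hG.dist_triangle
  have t4 : G.dist w a ≤ G.dist w y + G.dist y a := hG.dist_triangle
  omega
end

section
/- Fix an integer k ≥ 4 and let F ⊆ {−1,1}^{k−1} be the set of all sequences of the form (−1)^{x₁} ∘ 1^{x₂} ∘ (−1)^{x₃} ∘ 1^{k−1−x₁−x₂−x₃}, i.e., sequences whose first x₁ entries are −1, next x₂ entries are 1, next x₃ entries are −1, and all remaining entries are 1, ranging over nonnegative integers x₁, x₂, x₃ with x₁ + x₂ + x₃ ≤ k − 1. Then: (a) there do not exist members u, w of F and indices a < b < c < d in {1, …, k−1} with (u_a, u_b, u_c, u_d) = (1, −1, 1, −1) and (w_a, w_b, w_c, w_d) = (−1, 1, −1, 1); and (b) the cardinality of F is at least binomial(k−1, 3). -/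
private def seqOf (n a b c : ℕ) : Fin n → ℤ := fun i =>
  if (i : ℕ) < a then -1 else if (i : ℕ) < b then 1 else if (i : ℕ) < c then -1 else 1

private lemma sorted_three {α : Type*} [LinearOrder α] {s : Finset α} (h : s.card = 3) :
    ∃ a b c : α, a < b ∧ b < c ∧ s = {a, b, c} := by
  obtain ⟨a, b, c, hab, hac, hbc, rfl⟩ := Finset.card_eq_three.mp h
  rcases hab.lt_or_gt with h1 | h1 <;> rcases hac.lt_or_gt with h2 | h2 <;>
    rcases hbc.lt_or_gt with h3 | h3
  · exact ⟨a, b, c, h1, h3, rfl⟩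
  · exact ⟨a, c, b, h2, h3, by ext x; simp; tauto⟩
  · exact absurd (h1.trans h3) (lt_asymm h2)
  · exact ⟨c, a, b, h2, h1, by ext x; simp; tauto⟩
  · exact ⟨b, a, c, h1, h2, by ext x; simp; tauto⟩
  · exact absurd (h2.trans h3) (lt_asymm h1)
  · exact ⟨b, c, a, h3, h2, by ext x; simp; tauto⟩
  · exact ⟨c, b, a, h3, h1, by ext x; simp; tauto⟩

private lemma sorted_eq {n : ℕ} {a b c a' b' c' : Fin n} (h1 : a < b) (h2 : b < c)
    (h3 : a' < b') (h4 : b' < c')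
    (h : ({a, b, c} : Finset (Fin n)) = {a', b', c'}) :
    a = a' ∧ b = b' ∧ c = c' := by
  have h1' : (a : ℕ) < b := h1
  have h2' : (b : ℕ) < c := h2
  have h3' : (a' : ℕ) < b' := h3
  have h4' : (b' : ℕ) < c' := h4
  have ha : a = a' ∨ a = b' ∨ a = c' := by
    have : a ∈ ({a', b', c'} : Finset (Fin n)) := h ▸ (by simp)
    simpa using this
  have hb : b = a' ∨ b = b' ∨ b = c' := by
    have : b ∈ ({a', b', c'} : Finset (Fin n)) := h ▸ (by simp)
    simpa using this
  have hc : c = a' ∨ c = b' ∨ c = c' := by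
    have : c ∈ ({a', b', c'} : Finset (Fin n)) := h ▸ (by simp)
    simpa using this
  have ha' : a' = a ∨ a' = b ∨ a' = c := by
    have : a' ∈ ({a, b, c} : Finset (Fin n)) := h ▸ (by simp)
    simpa using this
  have hc' : c' = a ∨ c' = b ∨ c' = c := by
    have : c' ∈ ({a, b, c} : Finset (Fin n)) := h ▸ (by simp)
    simpa using this
  simp only [Fin.ext_iff] at ha hb hc ha' hc' ⊢
  rcases ha with ha | ha | ha <;> rcases ha' with ha' | ha' | ha' <;>
    rcases hc with hc | hc | hc <;> rcases hc' with hc' | hc' | hc' <;>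
    rcases hb with hb | hb | hb <;> omega

/-- The family of sequences `(−1)^{x₁} ∘ 1^{x₂} ∘ (−1)^{x₃} ∘ 1^{k−1−x₁−x₂−x₃}`
avoids the forbidden alternating configuration, yet has cardinality at least
`binom(k−1, 3)`. -/
theorem stmt_7 (k : ℕ) (hk : 4 ≤ k)
    (F : Set (Fin (k - 1) → ℤ))
    (hF : F = {f | ∃ x₁ x₂ x₃ : ℕ, x₁ + x₂ + x₃ ≤ k - 1 ∧
      ∀ i : Fin (k - 1), f i =
        if (i : ℕ) < x₁ then -1
        else if (i : ℕ) < x₁ + x₂ then 1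
        else if (i : ℕ) < x₁ + x₂ + x₃ then -1
        else 1}) :
    (¬ ∃ u ∈ F, ∃ w ∈ F, ∃ a b c d : Fin (k - 1), a < b ∧ b < c ∧ c < d ∧
      u a = 1 ∧ u b = -1 ∧ u c = 1 ∧ u d = -1 ∧
      w a = -1 ∧ w b = 1 ∧ w c = -1 ∧ w d = 1) ∧
    Nat.choose (k - 1) 3 ≤ F.ncard := by
  classical
  subst hF
  set n := k - 1 with hn
  have hn3 : 3 ≤ n := by omega
  set F : Set (Fin n → ℤ) := {f | ∃ x₁ x₂ x₃ : ℕ, x₁ + x₂ + x₃ ≤ n ∧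
      ∀ i : Fin n, f i =
        if (i : ℕ) < x₁ then -1
        else if (i : ℕ) < x₁ + x₂ then 1
        else if (i : ℕ) < x₁ + x₂ + x₃ then -1
        else 1} with hF
  constructor
  · rintro ⟨u, hu, w, -, a, b, c, d, hab, hbc, hcd,
      ha, hb, hc, hd, -, -, -, -⟩
    rw [hF] at hu
    obtain ⟨x₁, x₂, x₃, hsum, hval⟩ := hu
    have hab' : (a : ℕ) < b := hab
    have hbc' : (b : ℕ) < c := hbc
    have hcd' : (c : ℕ) < d := hcd
    rw [hval a] at ha; rw [hval b] at hb; rw [hval c] at hc; rw [hval d] at hd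
    split_ifs at ha hb hc hd <;> omega
  · -- F is finite
    have hFfin : F.Finite := by
      have hB : ((Set.Iic n) ×ˢ ((Set.Iic n) ×ˢ (Set.Iic n)) : Set (ℕ × ℕ × ℕ)).Finite :=
        (Set.finite_Iic n).prod ((Set.finite_Iic n).prod (Set.finite_Iic n))
      refine (hB.image (fun x : ℕ × ℕ × ℕ =>
        seqOf n x.1 (x.1 + x.2.1) (x.1 + x.2.1 + x.2.2))).subset ?_
      rintro f hf
      rw [hF] at hf
      obtain ⟨x₁, x₂, x₃, hsum, hval⟩ := hf
      refine ⟨(x₁, x₂, x₃), by simp [Set.mem_prod]; omega, ?_⟩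
      funext i
      simp only [seqOf]
      exact (hval i).symm
    -- the triples finset
    set T : Finset (Fin n × Fin n × Fin n) :=
      Finset.univ.filter (fun p => p.1 < p.2.1 ∧ p.2.1 < p.2.2) with hT
    set φ : Fin n × Fin n × Fin n → (Fin n → ℤ) :=
      fun p => seqOf n p.1 p.2.1 p.2.2 with hφ
    have hTcard : T.card = n.choose 3 := by
      have hpc : (Finset.powersetCard 3 (Finset.univ : Finset (Fin n))).card = n.choose 3 := by
        simp [Finset.card_powersetCard]
      rw [← hpc]
      refine Finset.card_bij (fun p _ => ({p.1, p.2.1, p.2.2} : Finset (Fin n))) ?_ ?_ ?_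
      · rintro ⟨a, b, c⟩ hp
        simp only [hT, Finset.mem_filter] at hp
        obtain ⟨-, h1, h2⟩ := hp
        rw [Finset.mem_powersetCard_univ]
        rw [Finset.card_insert_of_notMem (by simp [h1.ne, (h1.trans h2).ne]),
          Finset.card_insert_of_notMem (by simp [h2.ne]), Finset.card_singleton]
      · rintro ⟨a, b, c⟩ hp ⟨a', b', c'⟩ hp' h
        simp only [hT, Finset.mem_filter] at hp hp'
        obtain ⟨h1, h2, h3⟩ := sorted_eq hp.2.1 hp.2.2 hp'.2.1 hp'.2.2 h
        simp [h1, h2, h3]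
      · intro s hs
        rw [Finset.mem_powersetCard_univ] at hs
        obtain ⟨a, b, c, h1, h2, rfl⟩ := sorted_three hs
        refine ⟨(a, b, c), ?_, ?_⟩
        · simp [hT, h1, h2]
        · ext x; simp
    -- φ is injective on T
    have hinj : Set.InjOn φ ↑T := by
      rintro ⟨a, b, c⟩ hp ⟨a', b', c'⟩ hp' h
      simp only [hT, Finset.coe_filter, Set.mem_setOf_eq] at hp hp'
      obtain ⟨-, h1, h2⟩ := hp
      obtain ⟨-, h3, h4⟩ := hp'
      have h1' : (a : ℕ) < b := h1
      have h2' : (b : ℕ) < c := h2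
      have h3' : (a' : ℕ) < b' := h3
      have h4' : (b' : ℕ) < c' := h4
      simp only [hφ] at h
      have haa : (a : ℕ) = a' := by
        rcases lt_trichotomy (a : ℕ) (a' : ℕ) with hlt | heq | hlt
        · have := congrFun h a
          simp only [seqOf] at this
          split_ifs at this <;> omega
        · exact heq
        · have := congrFun h a'
          simp only [seqOf] at this
          split_ifs at this <;> omega
      have hbb : (b : ℕ) = b' := by
        rcases lt_trichotomy (b : ℕ) (b' : ℕ) with hlt | heq | hlt
        · have := congrFun h b
          simp only [seqOf] at this
          split_ifs at this <;> omega
        · exact heq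
        · have := congrFun h b'
          simp only [seqOf] at this
          split_ifs at this <;> omega
      have hcc : (c : ℕ) = c' := by
        rcases lt_trichotomy (c : ℕ) (c' : ℕ) with hlt | heq | hlt
        · have := congrFun h c
          simp only [seqOf] at this
          split_ifs at this <;> omega
        · exact heq
        · have := congrFun h c'
          simp only [seqOf] at this
          split_ifs at this <;> omega
      simp [Prod.ext_iff, Fin.ext_iff, haa, hbb, hcc]
    -- the image is in F
    have hsub : ↑(T.image φ) ⊆ F := by
      intro f hf
      simp only [Finset.coe_image, Set.mem_image, Finset.mem_coe] at hf
      obtain ⟨⟨a, b, c⟩, hp, rfl⟩ := hf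
      simp only [hT, Finset.mem_filter] at hp
      obtain ⟨-, h1, h2⟩ := hp
      have h1' : (a : ℕ) < b := h1
      have h2' : (b : ℕ) < c := h2
      have hcn : (c : ℕ) < n := c.isLt
      rw [hF]
      refine ⟨(a : ℕ), (b : ℕ) - a, (c : ℕ) - b, by omega, fun i => ?_⟩
      simp only [hφ, seqOf]
      have e1 : (a : ℕ) + ((b : ℕ) - a) = (b : ℕ) := by omega
      have e2 : (a : ℕ) + ((b : ℕ) - a) + ((c : ℕ) - b) = (c : ℕ) := by omega
      rw [e2, e1]
    calc n.choose 3 = T.card := hTcard.symm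
      _ = (T.image φ).card := (Finset.card_image_of_injOn hinj).symm
      _ = (↑(T.image φ) : Set (Fin n → ℤ)).ncard := (Set.ncard_coe_finset _).symm
      _ ≤ F.ncard := Set.ncard_le_ncard hsub hFfin
end

section
/- For every integer k' ≥ 2 there exist a finite connected simple graph G and distinct vertices s_1, s_2, …, s_{2k'} of G with s_m adjacent to s_{m+1} for all 1 ≤ m < 2k' and s_{2k'} adjacent to s_1 (so that s_1, …, s_{2k'} form a cycle of length k = 2k' in G), such that the number of distinct patterns, i.e., the cardinality of the set { p_v : v a vertex of G } where p_v = ⟨d(v,s_2)−d(v,s_1), d(v,s_3)−d(v,s_2), …, d(v,s_{2k'})−d(v,s_{2k'−1})⟩, is at least k'(k'−1)/2. -/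
/-!
Take the hypercube `Q_n` on `Fin n → Bool`, whose graph distance is the Hamming distance, and
the cycle `s_0, …, s_{2n-1}` that switches the coordinates `0, …, n-1` on one by one and then
off again in the same order. Step `j < n` of the cycle flips coordinate `j` from `false` to
`true`, so the `j`-th pattern entry of a vertex `v` is `-1` if `v j` and `1` otherwise. Hence
the first `n` entries of its pattern determine `v`, giving `2 ^ n ≥ n(n-1)/2` distinct patterns.
-/

open Finset Function

theorem hammingDist_update_right_add {ι : Type*} {β : ι → Type*} [Fintype ι] [DecidableEq ι]
    [∀ i, DecidableEq (β i)] (x y : ∀ i, β i) (c : ι) (b : β c) :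
    hammingDist x (update y c b) + (if x c = y c then 0 else 1) =
      hammingDist x y + (if x c = b then 0 else 1) := by
  have hoff : ∑ i ∈ {c}ᶜ, (if x i ≠ update y c b i then 1 else 0) =
      ∑ i ∈ {c}ᶜ, (if x i ≠ y i then 1 else 0) :=
    sum_congr rfl fun i hi => by rw [update_of_ne (by simpa using hi)]
  simp only [hammingDist, card_filter, Fintype.sum_eq_add_sum_compl c, hoff, update_self]
  split_ifs <;> simp_all <;> omega

namespace SimpleGraph

def hypercube (ι : Type*) [Fintype ι] : SimpleGraph (ι → Bool) where
  Adj u v := hammingDist u v = 1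
  symm := ⟨fun u v h => by rwa [hammingDist_comm]⟩
  loopless := ⟨fun u h => by simp at h⟩

variable {ι : Type*} [Fintype ι]

@[simp]
theorem hypercube_adj {u v : ι → Bool} : (hypercube ι).Adj u v ↔ hammingDist u v = 1 := Iff.rfl

theorem hypercube_adj_update [DecidableEq ι] {u : ι → Bool} {c : ι} {b : Bool} (hb : b ≠ u c) :
    (hypercube ι).Adj u (update u c b) := by
  simpa [hb.symm] using hammingDist_update_right_add u u c b

theorem hammingDist_le_length {u v : ι → Bool} (p : (hypercube ι).Walk u v) :
    hammingDist u v ≤ p.length := by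
  induction p with
  | nil => simp
  | @cons a b c hab _ ih =>
    rw [hypercube_adj] at hab
    have := hammingDist_triangle a b c
    rw [Walk.length_cons]
    omega

theorem exists_walk_length_eq_hammingDist (u v : ι → Bool) :
    ∃ p : (hypercube ι).Walk u v, p.length = hammingDist u v := by
  classical
  induction hd : hammingDist u v generalizing u with
  | zero => exact hammingDist_eq_zero.1 hd ▸ ⟨.nil, rfl⟩
  | succ d ih =>
    obtain ⟨c, hc⟩ := ne_iff.1 (hammingDist_ne_zero.1 (by omega : hammingDist u v ≠ 0))
    have hstep := hammingDist_update_right_add v u c (v c)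
    simp only [Ne.symm hc, if_true, if_false, hammingDist_comm v] at hstep
    obtain ⟨p, hp⟩ := ih (update u c (v c)) (by omega)
    exact ⟨.cons (hypercube_adj_update hc.symm) p, by simp [hp]⟩

theorem hypercube_dist (u v : ι → Bool) : (hypercube ι).dist u v = hammingDist u v := by
  obtain ⟨p, hp⟩ := exists_walk_length_eq_hammingDist u v
  obtain ⟨q, hq⟩ := p.reachable.exists_walk_length_eq_dist
  exact le_antisymm (hp ▸ dist_le p) (hq ▸ hammingDist_le_length q)

theorem hypercube_connected [Nonempty ι] : (hypercube ι).Connected :=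
  (connected_iff _).2 ⟨fun u v => ⟨(exists_walk_length_eq_hammingDist u v).choose⟩, ⟨fun _ => false⟩⟩

end SimpleGraph

open SimpleGraph

-- For `j ≤ n` the coordinates `i < j` are on, for `n ≤ j ≤ 2 * n` the coordinates `i ≥ j - n`.
def cubeCycle (n j : ℕ) (i : Fin n) : Bool := decide ((i : ℕ) < j ∧ j ≤ i + n)

theorem cubeCycle_succ {n j : ℕ} (c : Fin n) (hc : j = c ∨ j = c + n) :
    cubeCycle n (j + 1) = update (cubeCycle n j) c (!cubeCycle n j c) := by
  funext i
  rcases eq_or_ne i c with rfl | hi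
  · simp only [cubeCycle, update_self, Bool.eq_not_iff, ne_eq, decide_eq_decide]
    omega
  · have : (i : ℕ) ≠ c := Fin.val_ne_of_ne hi
    simp only [cubeCycle, update_of_ne hi, decide_eq_decide]
    omega

theorem cubeCycle_two_mul (n : ℕ) : cubeCycle n (2 * n) = cubeCycle n 0 := by
  funext i
  simp only [cubeCycle, decide_eq_decide]
  omega

theorem cubeCycle_adj {n j : ℕ} (hj : j < 2 * n) :
    (hypercube (Fin n)).Adj (cubeCycle n j) (cubeCycle n (j + 1)) := by
  let c : Fin n := ⟨if j < n then j else j - n, by split_ifs <;> omega⟩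
  rw [cubeCycle_succ c (by simp only [c]; split_ifs <;> omega)]
  exact hypercube_adj_update (by simp)

theorem cubeCycle_injOn {n : ℕ} (hn : 0 < n) : Set.InjOn (cubeCycle n) (Set.Iio (2 * n)) := by
  intro j₁ hj₁ j₂ hj₂ h
  rw [Set.mem_Iio] at hj₁ hj₂
  have key (i : Fin n) : ((i : ℕ) < j₁ ∧ j₁ ≤ i + n ↔ (i : ℕ) < j₂ ∧ j₂ ≤ i + n) :=
    decide_eq_decide.1 (congrFun h i)
  have h₀ := key ⟨0, hn⟩
  have h₁ := key ⟨n - 1, by omega⟩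
  have h₂ := key ⟨if j₁ < n then j₁ else j₁ - n, by split_ifs <;> omega⟩
  have h₃ := key ⟨if j₂ < n then j₂ else j₂ - n, by split_ifs <;> omega⟩
  simp only at h₀ h₁ h₂ h₃
  split_ifs at h₂ h₃ <;> omega

theorem cubeCycle_dist_succ_sub_dist {n : ℕ} (v : Fin n → Bool) (c : Fin n) :
    ((hypercube (Fin n)).dist v (cubeCycle n (c + 1)) : ℤ) -
      (hypercube (Fin n)).dist v (cubeCycle n c) = if v c then -1 else 1 := by
  have hc : cubeCycle n c c = false := by simp [cubeCycle]
  have := hammingDist_update_right_add v (cubeCycle n c) c true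
  rw [hypercube_dist, hypercube_dist, cubeCycle_succ c (.inl rfl), hc]
  rw [hc] at this
  cases hv : v c <;> simp [hv] at this ⊢ <;> omega

theorem injective_cubeCycle_pattern (n : ℕ) :
    Injective fun (v : Fin n → Bool) (i : Fin (2 * n - 1)) =>
      ((hypercube (Fin n)).dist v (cubeCycle n (i + 1)) : ℤ) -
        (hypercube (Fin n)).dist v (cubeCycle n i) := by
  intro v w h
  funext c
  have hc := congrFun h ⟨c, by omega⟩
  simp only [cubeCycle_dist_succ_sub_dist v c, cubeCycle_dist_succ_sub_dist w c] at hc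
  revert hc
  cases v c <;> cases w c <;> simp

/-- Lemma 11 of the paper: for every `k' ≥ 2` there is a finite connected graph
with a cycle `s_1, …, s_{2k'}` of length `k = 2k'` on which the number of distinct
patterns is at least `k'(k'−1)/2 = Ω(k²)`. -/
theorem stmt_12 (k' : ℕ) (hk : 2 ≤ k') :
    ∃ (V : Type) (_ : Fintype V) (G : SimpleGraph V) (s : Fin (2 * k') → V),
      G.Connected ∧ Function.Injective s ∧
      (∀ m : ℕ, (hm : m + 1 < 2 * k') →
        G.Adj (s ⟨m, by omega⟩) (s ⟨m + 1, hm⟩)) ∧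
      G.Adj (s ⟨2 * k' - 1, by omega⟩) (s ⟨0, by omega⟩) ∧
      k' * (k' - 1) / 2 ≤
        {p : Fin (2 * k' - 1) → ℤ | ∃ v : V, ∀ i : Fin (2 * k' - 1),
          p i = (G.dist v (s ⟨(i : ℕ) + 1, by have := i.isLt; omega⟩) : ℤ)
              - (G.dist v (s ⟨(i : ℕ), by have := i.isLt; omega⟩) : ℤ)}.ncard := by
  have hk₀ : 0 < k' := by omega
  refine ⟨Fin k' → Bool, inferInstance, hypercube (Fin k'), fun j => cubeCycle k' j,
    @hypercube_connected _ _ ⟨⟨0, hk₀⟩⟩, fun a b h => Fin.ext (cubeCycle_injOn hk₀ a.isLt b.isLt h),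
    fun m hm => cubeCycle_adj (by omega), ?_, ?_⟩
  · have := cubeCycle_adj (n := k') (j := 2 * k' - 1) (by omega)
    rwa [Nat.sub_add_cancel (by omega), cubeCycle_two_mul] at this
  · calc k' * (k' - 1) / 2 = k'.choose 2 := (Nat.choose_two_right k').symm
      _ ≤ 2 ^ k' := Nat.choose_le_two_pow k' 2
      _ = (Set.range _).ncard := by
        rw [Set.ncard_range_of_injective (injective_cubeCycle_pattern k')]
        simp
      _ = _ := by
        congr 1
        ext p
        simp [funext_iff, eq_comm]
end

section
/- There exist an integer k ≥ 5, a finite connected simple graph G, distinct vertices s_1, …, s_k of G with s_m adjacent to s_{m+1} for all 1 ≤ m < k and s_k adjacent to s_1, and indices 1 ≤ a < b < c ≤ k−1, such that for every sign vector ε ∈ {−1,1}³ there is a vertex v of G whose pattern p_v = ⟨d(v,s_2)−d(v,s_1), …, d(v,s_k)−d(v,s_{k−1})⟩ satisfies (p_v[a], p_v[b], p_v[c]) = ε. In other words, the matrix whose rows are the patterns of G has VC-dimension at least 3. -/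
/-!
Distances among the hexagon vertices `s₀ … s₅` are those of the bare hexagon, so the pattern of
each `sᵢ` changes sign exactly twice around the cycle, and on the coordinates `2, 3, 4` the six
`sᵢ` realize all sign vectors except the alternating ones `(+, -, +)` and `(-, +, -)`. These two
are realized by a hub `x = 6` joined to `s₀, s₂, s₄` and a hub `y = 7` joined to `s₃, s₅` and `x`.
All distances of this eight-vertex graph are certified by a table that is `0` only at the source,
`1`-Lipschitz along edges, and drops by one along some edge into every other vertex.
-/

namespace SimpleGraph

variable {V : Type*} {G : SimpleGraph V}

theorem Walk.apply_le_apply_add_length {f : V → ℕ} (hf : ∀ u v, G.Adj u v → f v ≤ f u + 1)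
    {u v : V} (p : G.Walk u v) : f v ≤ f u + p.length := by
  induction p with
  | nil => simp
  | cons h _ ih =>
    have := hf _ _ h
    rw [length_cons]
    omega

theorem exists_walk_length_eq_of_descent {s : V} {f : V → ℕ} (hs : f s = 0)
    (hstep : ∀ v, v ≠ s → ∃ w, G.Adj w v ∧ f w + 1 = f v) (v : V) :
    ∃ p : G.Walk s v, p.length = f v := by
  induction h : f v generalizing v with
  | zero =>
    by_cases hv : v = s
    · subst hv
      exact ⟨Walk.nil, rfl⟩
    · obtain ⟨w, -, hw⟩ := hstep v hv
      omega
  | succ n ih =>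
    have hv : v ≠ s := by rintro rfl; omega
    obtain ⟨w, hwv, hw⟩ := hstep v hv
    obtain ⟨p, hp⟩ := ih w (by omega)
    exact ⟨p.concat hwv, by rw [Walk.length_concat, hp]⟩

theorem reachable_and_dist_eq_of_descent {s : V} {f : V → ℕ}
    (hf : ∀ u v, G.Adj u v → f v ≤ f u + 1) (hs : f s = 0)
    (hstep : ∀ v, v ≠ s → ∃ w, G.Adj w v ∧ f w + 1 = f v) (v : V) :
    G.Reachable s v ∧ G.dist s v = f v := by
  obtain ⟨p, hp⟩ := exists_walk_length_eq_of_descent hs hstep v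
  obtain ⟨q, hq⟩ := p.reachable.exists_walk_length_eq_dist
  have := q.apply_le_apply_add_length hf
  have := dist_le p
  exact ⟨p.reachable, by omega⟩

end SimpleGraph

def hexagonWithHubs : SimpleGraph (Fin 8) :=
  SimpleGraph.fromRel fun u v => (u, v) ∈
    [(0, 1), (1, 2), (2, 3), (3, 4), (4, 5), (5, 0), (6, 0), (6, 2), (6, 4), (7, 3), (7, 5), (6, 7)]

instance : DecidableRel hexagonWithHubs.Adj :=
  inferInstanceAs (DecidableRel (SimpleGraph.fromRel _).Adj)

def hexagonWithHubsDist : Fin 8 → Fin 8 → ℕ :=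
  ![![0, 1, 2, 3, 2, 1, 1, 2],
    ![1, 0, 1, 2, 3, 2, 2, 3],
    ![2, 1, 0, 1, 2, 3, 1, 2],
    ![3, 2, 1, 0, 1, 2, 2, 1],
    ![2, 3, 2, 1, 0, 1, 1, 2],
    ![1, 2, 3, 2, 1, 0, 2, 1],
    ![1, 2, 1, 2, 1, 2, 0, 1],
    ![2, 3, 2, 1, 2, 1, 1, 0]]

theorem hexagonWithHubs_reachable_and_dist_eq (u v : Fin 8) :
    hexagonWithHubs.Reachable u v ∧ hexagonWithHubs.dist u v = hexagonWithHubsDist u v :=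
  have certificate : ∀ s : Fin 8,
      (∀ u v, hexagonWithHubs.Adj u v → hexagonWithHubsDist s v ≤ hexagonWithHubsDist s u + 1) ∧
      hexagonWithHubsDist s s = 0 ∧
      ∀ v, v ≠ s → ∃ w, hexagonWithHubs.Adj w v ∧
        hexagonWithHubsDist s w + 1 = hexagonWithHubsDist s v := by
    decide
  SimpleGraph.reachable_and_dist_eq_of_descent (certificate u).1 (certificate u).2.1
    (certificate u).2.2 v

/-- Proposition 3 (the `≥ 3` direction): there is a finite connected graph with a
boundary cycle `s_1, …, s_k` (`k ≥ 5`) and three pattern coordinates `a < b < c`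
on which all `2³` sign vectors are realized by patterns of vertices, i.e. the
matrix of patterns has VC-dimension at least 3. -/
theorem stmt_14 :
    ∃ (k : ℕ) (_hk : 5 ≤ k),
    ∃ (V : Type) (_ : Fintype V) (G : SimpleGraph V) (s : Fin k → V),
      G.Connected ∧ Function.Injective s ∧
      (∀ m : ℕ, (hm : m + 1 < k) → G.Adj (s ⟨m, by omega⟩) (s ⟨m + 1, hm⟩)) ∧
      G.Adj (s ⟨k - 1, by omega⟩) (s ⟨0, by omega⟩) ∧
      ∃ a b c : Fin (k - 1), a < b ∧ b < c ∧
        ∀ ε₁ ε₂ ε₃ : ℤ, (ε₁ = 1 ∨ ε₁ = -1) → (ε₂ = 1 ∨ ε₂ = -1) →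
          (ε₃ = 1 ∨ ε₃ = -1) →
          ∃ v : V,
            (G.dist v (s ⟨(a : ℕ) + 1, by have := a.isLt; omega⟩) : ℤ)
              - (G.dist v (s ⟨(a : ℕ), by have := a.isLt; omega⟩) : ℤ) = ε₁ ∧
            (G.dist v (s ⟨(b : ℕ) + 1, by have := b.isLt; omega⟩) : ℤ)
              - (G.dist v (s ⟨(b : ℕ), by have := b.isLt; omega⟩) : ℤ) = ε₂ ∧
            (G.dist v (s ⟨(c : ℕ) + 1, by have := c.isLt; omega⟩) : ℤ)
              - (G.dist v (s ⟨(c : ℕ), by have := c.isLt; omega⟩) : ℤ) = ε₃ := by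
  refine ⟨6, by norm_num, Fin 8, inferInstance, hexagonWithHubs, Fin.castLE (by norm_num),
    ?connected, Fin.castLE_injective _, ?cycle, by decide, 2, 3, 4, by decide, by decide, ?signs⟩
  case connected =>
    exact hexagonWithHubs.connected_iff_exists_forall_reachable.2
      ⟨0, fun v => (hexagonWithHubs_reachable_and_dist_eq 0 v).1⟩
  case cycle =>
    intro m hm
    have : m < 5 := by omega
    interval_cases m <;> decide +revert
  case signs =>
    intro ε₁ ε₂ ε₃ h₁ h₂ h₃
    simp only [fun u v => (hexagonWithHubs_reachable_and_dist_eq u v).2]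
    rcases h₁ with rfl | rfl <;> rcases h₂ with rfl | rfl <;> rcases h₃ with rfl | rfl <;> decide
end
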